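/- arXiv:2203.05929 — 5 statements merged into one kernel-verified Lean document; each statement's English description precedes it below -/
import Mathlib

section
/- Let V and Q be real inner product spaces (velocity and pressure spaces), with a bilinear form a₁((v,q),(w,r)) = a(v,w) − b(v,r) + b(w,q), where a is the inner product on V and b : V × Q → ℝ is bilinear. Assume the inf-sup condition: there is μ > 0 such that for every q ∈ Q there exists w ∈ V with ‖w‖_V = 1 and b(w,q) ≥ μ‖q‖_Q. Then for every nonzero (v,q) ∈ V × Q, sup over nonzero (w,r) ∈ V × Q of a₁((v,q),(w,r)) / (‖(v,q)‖·‖(w,r)‖) ≥ μ²/(1+μ)², where ‖(v,q)‖² = ‖v‖_V² + ‖q‖_Q². -/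
open scoped RealInnerProductSpace

set_option maxHeartbeats 1000000 in
private lemma keyC (μ x y : ℝ) (hμ : 0 < μ) (hx : 0 ≤ x) (hy : 0 ≤ y) :
    μ^4 * (x^2+y^2) * (((1+μ^2)*x - 2*μ*y)^2 + (1+μ^2)^2*y^2)
      ≤ (1+μ)^4 * ((1+μ^2)*x^2 - 2*μ*x*y + 2*μ^2*y^2)^2 := by
  have hμ' := hμ.le
  linarith [
    mul_nonneg (pow_nonneg hμ' 0) (sq_nonneg ((x-μ*y)^2)),
    mul_nonneg (pow_nonneg hμ' 1) (sq_nonneg ((x-μ*y)^2)),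
    mul_nonneg (pow_nonneg hμ' 2) (sq_nonneg ((x-μ*y)^2)),
    mul_nonneg (pow_nonneg hμ' 2) (sq_nonneg ((x-μ*y)*(μ*x-y))),
    mul_nonneg (pow_nonneg hμ' 3) (sq_nonneg ((x-μ*y)*(μ*x-y))),
    mul_nonneg (pow_nonneg hμ' 2) (sq_nonneg (x*(x-μ*y))),
    mul_nonneg (pow_nonneg hμ' 3) (sq_nonneg (x*(x-μ*y))),
    mul_nonneg (pow_nonneg hμ' 4) (sq_nonneg (x*(x-μ*y))),
    mul_nonneg (pow_nonneg hμ' 5) (sq_nonneg (x*(x-μ*y))),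
    mul_nonneg (pow_nonneg hμ' 3) (sq_nonneg (y*(x-μ*y))),
    mul_nonneg (pow_nonneg hμ' 4) (sq_nonneg (y*(x-μ*y))),
    mul_nonneg (pow_nonneg hμ' 5) (sq_nonneg (y*(x-μ*y))),
    mul_nonneg (pow_nonneg hμ' 6) (sq_nonneg (y*(x-μ*y))),
    mul_nonneg (pow_nonneg hμ' 4) (mul_nonneg (pow_nonneg hx 2) (pow_nonneg hy 2)),
    mul_nonneg (pow_nonneg hμ' 5) (mul_nonneg (pow_nonneg hx 2) (pow_nonneg hy 2)),
    mul_nonneg (pow_nonneg hμ' 6) (mul_nonneg (pow_nonneg hx 2) (pow_nonneg hy 2)),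
    mul_nonneg (pow_nonneg hμ' 7) (mul_nonneg (pow_nonneg hx 2) (pow_nonneg hy 2)),
    mul_nonneg (pow_nonneg hμ' 8) (mul_nonneg (pow_nonneg hx 2) (pow_nonneg hy 2)),
    mul_nonneg (pow_nonneg hμ' 5) (pow_nonneg hy 4),
    mul_nonneg (pow_nonneg hμ' 6) (pow_nonneg hy 4),
    mul_nonneg (pow_nonneg hμ' 7) (pow_nonneg hy 4),
    mul_nonneg (pow_nonneg hμ' 8) (pow_nonneg hy 4),
    mul_nonneg (pow_nonneg hμ' 5) (mul_nonneg (pow_nonneg hx 3) hy),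
    mul_nonneg (pow_nonneg hμ' 6) (mul_nonneg (pow_nonneg hx 3) hy),
    mul_nonneg (pow_nonneg hμ' 6) (pow_nonneg hx 4),
    mul_nonneg (pow_nonneg hμ' 7) (pow_nonneg hx 4)]

private lemma keyC' (μ x y : ℝ) (hμ : 0 < μ) (hx : 0 ≤ x) (hy : 0 ≤ y) :
    μ^4 * (1+μ^2) * (x^2+y^2) ≤ (1+μ)^4 * ((1+μ^2)*x^2 - 2*μ*x*y + 2*μ^2*y^2) := by
  have hμ' := hμ.le
  nlinarith [mul_nonneg (pow_nonneg hμ' 0) (sq_nonneg (x-μ*y)),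
    mul_nonneg (pow_nonneg hμ' 1) (sq_nonneg (x-μ*y)),
    mul_nonneg (pow_nonneg hμ' 2) (sq_nonneg (x-μ*y)),
    mul_nonneg (pow_nonneg hμ' 3) (sq_nonneg (x-μ*y)),
    mul_nonneg (pow_nonneg hμ' 4) (sq_nonneg (x-μ*y)),
    mul_nonneg (pow_nonneg hμ' 2) (sq_nonneg x),
    mul_nonneg (pow_nonneg hμ' 3) (sq_nonneg x),
    mul_nonneg (pow_nonneg hμ' 4) (sq_nonneg x),
    mul_nonneg (pow_nonneg hμ' 5) (sq_nonneg x),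
    mul_nonneg (pow_nonneg hμ' 2) (sq_nonneg y),
    mul_nonneg (pow_nonneg hμ' 3) (sq_nonneg y),
    mul_nonneg (pow_nonneg hμ' 4) (sq_nonneg y),
    mul_nonneg (pow_nonneg hμ' 5) (sq_nonneg y)]

set_option maxHeartbeats 1000000 in
private lemma key2 (μ x y s : ℝ) (hμ : 0 < μ) (hx : 0 ≤ x) (hy : 0 ≤ y) (hs : -x ≤ s) :
    μ^4 * ((x^2+y^2) * ((1+μ^2)^2*(x^2+y^2) + 4*μ*(1+μ^2)*y*s + 4*μ^2*y^2))
      ≤ (1+μ)^4 * ((1+μ^2)*x^2 + 2*μ*y*s + 2*μ^2*y^2)^2 := by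
  have he : (0:ℝ) ≤ s + x := by linarith
  have hC := keyC μ x y hμ hx hy
  have hC' := keyC' μ x y hμ hx hy
  have hprod : 0 ≤ (μ*y*(s+x)) * ((1+μ)^4 * ((1+μ^2)*x^2 - 2*μ*x*y + 2*μ^2*y^2) - μ^4 * (1+μ^2) * (x^2+y^2)) :=
    mul_nonneg (mul_nonneg (mul_nonneg hμ.le hy) he) (by linarith)
  linarith [hC, hprod,
    mul_nonneg (pow_nonneg hμ.le 2) (sq_nonneg (y*(s+x))),
    mul_nonneg (pow_nonneg hμ.le 3) (sq_nonneg (y*(s+x))),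
    mul_nonneg (pow_nonneg hμ.le 4) (sq_nonneg (y*(s+x))),
    mul_nonneg (pow_nonneg hμ.le 5) (sq_nonneg (y*(s+x))),
    mul_nonneg (pow_nonneg hμ.le 6) (sq_nonneg (y*(s+x)))]

set_option maxHeartbeats 1000000 in
private lemma core (μ x y s bq K : ℝ) (hμ : 0 < μ) (hx : 0 ≤ x) (hy : 0 < y)
    (hs : -x ≤ s) (hb : μ*y ≤ bq)
    (hK : x^2 + (2*μ*y/(1+μ^2))*s + (2*μ*y/(1+μ^2))*bq
        ≤ K * Real.sqrt (x^2+y^2)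
            * Real.sqrt ((x^2 + 2*((2*μ*y/(1+μ^2))*s) + (2*μ*y/(1+μ^2))^2) + y^2)) :
    μ^2/(1+μ)^2 ≤ K := by
  set T := 2*μ*y/(1+μ^2) with hTd
  have hA : (0:ℝ) < 1+μ^2 := by positivity
  have hT0 : 0 ≤ T := by rw [hTd]; positivity
  have hT : (1+μ^2)*T = 2*μ*y := by rw [hTd]; field_simp
  have he : (0:ℝ) ≤ s + x := by linarith
  have hE1 : (1+μ^2)*(x^2+T*s+T*(μ*y)) = (1+μ^2)*x^2 + 2*μ*y*s + 2*μ^2*y^2 := by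
    linear_combination (s + μ*y) * hT
  have hE2 : (1+μ^2)^2*((x^2 + 2*(T*s) + T^2) + y^2)
      = (1+μ^2)^2*(x^2+y^2) + 4*μ*(1+μ^2)*y*s + 4*μ^2*y^2 := by
    linear_combination (2*(1+μ^2)*s + (1+μ^2)*T + 2*μ*y) * hT
  have hNA : 0 ≤ (1+μ^2)*(x^2+T*s+T*(μ*y)) := by
    rw [hE1]
    nlinarith [sq_nonneg (x-μ*y), mul_nonneg (mul_nonneg hμ.le hy.le) he,
      mul_nonneg (mul_nonneg (mul_nonneg hμ.le hμ.le) hx) hx,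
      mul_nonneg (mul_nonneg (mul_nonneg hμ.le hμ.le) hy.le) hy.le]
  have hN' : 0 ≤ x^2 + T*s + T*(μ*y) := by nlinarith [hNA, hA]
  have h2 : μ^4*((x^2+y^2)*((x^2 + 2*(T*s) + T^2) + y^2))
      ≤ (1+μ)^4*(x^2+T*s+T*(μ*y))^2 := by
    have hk := key2 μ x y s hμ hx hy.le hs
    rw [← hE1, ← hE2] at hk
    have hA2 : (0:ℝ) < (1+μ^2)^2 := by positivity
    refine le_of_mul_le_mul_left ?_ hA2
    nlinarith [hk]
  have hDarg : (0:ℝ) ≤ (x^2 + 2*(T*s) + T^2) + y^2 := by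
    nlinarith [sq_nonneg (x-T), mul_nonneg hT0 he, sq_nonneg y]
  have hDpos : (0:ℝ) < (x^2 + 2*(T*s) + T^2) + y^2 := by
    nlinarith [sq_nonneg (x-T), mul_nonneg hT0 he, mul_pos hy hy]
  have hRpos : (0:ℝ) < x^2 + y^2 := by nlinarith [sq_nonneg x, mul_pos hy hy]
  set R := Real.sqrt (x^2+y^2) with hRd
  set D := Real.sqrt ((x^2 + 2*(T*s) + T^2) + y^2) with hDd
  have hR2 : R^2 = x^2+y^2 := Real.sq_sqrt hRpos.le
  have hD2 : D^2 = (x^2 + 2*(T*s) + T^2) + y^2 := Real.sq_sqrt hDarg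
  have hR0 : 0 < R := Real.sqrt_pos.mpr hRpos
  have hD0 : 0 < D := Real.sqrt_pos.mpr hDpos
  have h3 : μ^2 * (R*D) ≤ (1+μ)^2 * (x^2+T*s+T*(μ*y)) := by
    have hsq : (μ^2*(R*D))^2 ≤ ((1+μ)^2*(x^2+T*s+T*(μ*y)))^2 := by
      have e1 : (μ^2*(R*D))^2 = μ^4*(R^2*D^2) := by ring
      rw [e1, hR2, hD2]
      nlinarith [h2]
    nlinarith [hsq, mul_pos (mul_pos hR0 hD0) (pow_pos hμ 2),
      mul_nonneg (by positivity : (0:ℝ) ≤ (1+μ)^2) hN',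
      mul_nonneg (mul_nonneg hR0.le hD0.le) (pow_nonneg hμ.le 2)]
  have hN'N : x^2+T*s+T*(μ*y) ≤ x^2+T*s+T*bq := by
    nlinarith [mul_nonneg hT0 (by linarith : (0:ℝ) ≤ bq - μ*y)]
  have h4 : μ^2 * (R*D) ≤ (1+μ)^2 * (K*(R*D)) := by
    nlinarith [h3, hK, hN'N, (by positivity : (0:ℝ) < (1+μ)^2)]
  have h5 : μ^2 ≤ (1+μ)^2 * K := by
    nlinarith [h4, mul_pos hR0 hD0]
  rw [div_le_iff₀ (by positivity)]
  linarith

/-- Inf-sup stability of the Stokes saddle-point form `a₁((v,q),(w,r)) = ⟪v,w⟫ - b v r + b w q`: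
if `b` satisfies the inf-sup condition with constant `μ`, then for every nonzero `(v,q)`
the sup over nonzero `(w,r)` of `a₁((v,q),(w,r)) / (‖(v,q)‖ ‖(w,r)‖)` is at least
`μ² / (1+μ)²`, where `‖(v,q)‖² = ‖v‖² + ‖q‖²`. -/
theorem stmt0
    {V Q : Type*} [NormedAddCommGroup V] [InnerProductSpace ℝ V]
    [NormedAddCommGroup Q] [InnerProductSpace ℝ Q]
    (b : V →ₗ[ℝ] Q →ₗ[ℝ] ℝ) (μ : ℝ) (hμ : 0 < μ)
    (hinfsup : ∀ q : Q, ∃ w : V, ‖w‖ = 1 ∧ μ * ‖q‖ ≤ b w q)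
    (a₁ : (V × Q) → (V × Q) → ℝ)
    (ha₁ : ∀ v q w r, a₁ (v, q) (w, r) = ⟪v, w⟫ - b v r + b w q)
    (v : V) (q : Q) (hvq : (v, q) ≠ 0) :
    ∀ K : ℝ,
      (∀ w : V, ∀ r : Q, (w, r) ≠ (0, 0) →
        a₁ (v, q) (w, r) ≤
          K * Real.sqrt (‖v‖ ^ 2 + ‖q‖ ^ 2) * Real.sqrt (‖w‖ ^ 2 + ‖r‖ ^ 2)) →
      μ ^ 2 / (1 + μ) ^ 2 ≤ K := by
  intro K hK
  by_cases hq : q = 0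
  · subst hq
    have hv : v ≠ 0 := by
      intro h; exact hvq (by simp [h, Prod.ext_iff])
    have h := hK v 0 (by simp [hv])
    rw [ha₁] at h
    have hb0 : b v (0:Q) = 0 := map_zero (b v)
    have hs : Real.sqrt (‖v‖^2 + ‖(0:Q)‖^2) = ‖v‖ := by
      simp [Real.sqrt_sq (norm_nonneg v)]
    rw [hs, hb0, real_inner_self_eq_norm_sq] at h
    have hv0 : 0 < ‖v‖ := norm_pos_iff.mpr hv
    have hK1 : 1 ≤ K := by nlinarith [h, mul_pos hv0 hv0]
    have : μ^2/(1+μ)^2 ≤ 1 := by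
      rw [div_le_one (by positivity)]; nlinarith
    linarith
  · obtain ⟨wq, hwq1, hwqb⟩ := hinfsup q
    have hy : (0:ℝ) < ‖q‖ := norm_pos_iff.mpr hq
    have hA : (0:ℝ) < 1+μ^2 := by positivity
    set T := 2*μ*‖q‖/(1+μ^2) with hTd
    have hT0 : 0 ≤ T := by rw [hTd]; positivity
    have habs : |⟪v, wq⟫| ≤ ‖v‖ := by
      have := abs_real_inner_le_norm v wq
      rwa [hwq1, mul_one] at this
    have hs : -‖v‖ ≤ ⟪v, wq⟫ := by
      have := neg_abs_le ⟪v, wq⟫; linarith [(abs_le.mp habs).1]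
    refine core μ ‖v‖ ‖q‖ ⟪v, wq⟫ (b wq q) K hμ (norm_nonneg v) hy hs hwqb ?_
    have hne : (v + T • wq, q) ≠ ((0:V), (0:Q)) := by
      intro h; exact hq (congrArg Prod.snd h)
    have h := hK (v + T • wq) q hne
    rw [ha₁] at h
    have e1 : ⟪v, v + T • wq⟫ - b v q + b (v + T • wq) q
        = ‖v‖^2 + T*⟪v, wq⟫ + T*(b wq q) := by
      rw [inner_add_right, real_inner_smul_right, real_inner_self_eq_norm_sq]
      simp [map_add, map_smul]
      ring
    have e2 : ‖v + T • wq‖^2 = ‖v‖^2 + 2*(T*⟪v, wq⟫) + T^2 := by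
      rw [norm_add_sq_real, real_inner_smul_right, norm_smul, hwq1,
        Real.norm_eq_abs, abs_of_nonneg hT0]
      ring
    rw [e1, e2] at h
    convert h using 3 <;> rw [hTd]
end

section
/- Let E be a real inner product space, and let w, v ∈ E satisfy the strengthened Cauchy–Schwarz inequality ⟪w, v⟫ ≤ γ ‖w‖ ‖v‖ for some γ ∈ [0,1). Then ‖w + v‖² ≥ (1 − γ²) ‖w‖². In particular, ‖w‖ ≤ (1 − γ²)^{-1/2} ‖w + v‖. -/
open scoped RealInnerProductSpace

/-- Strengthened Cauchy–Schwarz: if `|⟪w,v⟫| ≤ γ‖w‖‖v‖` with `γ ∈ [0,1)`, then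
`‖w+v‖² ≥ (1-γ²)‖w‖²`; in particular `‖w‖ ≤ (1-γ²)^{-1/2} ‖w+v‖`. -/
theorem stmt2
    {E : Type*} [NormedAddCommGroup E] [InnerProductSpace ℝ E]
    (γ : ℝ) (hγ0 : 0 ≤ γ) (hγ1 : γ < 1) (w v : E)
    (hSCS : |⟪w, v⟫| ≤ γ * ‖w‖ * ‖v‖) :
    (1 - γ ^ 2) * ‖w‖ ^ 2 ≤ ‖w + v‖ ^ 2 ∧
      ‖w‖ ≤ (Real.sqrt (1 - γ ^ 2))⁻¹ * ‖w + v‖ := by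
  have hexp : ‖w + v‖ ^ 2 = ‖w‖ ^ 2 + 2 * ⟪w, v⟫ + ‖v‖ ^ 2 := by
    rw [@norm_add_sq_real]
  have hlow : -(γ * ‖w‖ * ‖v‖) ≤ ⟪w, v⟫ := neg_le_of_abs_le hSCS
  have hsq : 0 ≤ (‖v‖ - γ * ‖w‖) ^ 2 := sq_nonneg _
  have h1 : (1 - γ ^ 2) * ‖w‖ ^ 2 ≤ ‖w + v‖ ^ 2 := by
    rw [hexp]; nlinarith
  refine ⟨h1, ?_⟩
  have hpos : 0 < 1 - γ ^ 2 := by nlinarith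
  have hs : 0 < Real.sqrt (1 - γ ^ 2) := Real.sqrt_pos.mpr hpos
  have hw : Real.sqrt (1 - γ ^ 2) * ‖w‖ ≤ ‖w + v‖ := by
    have h2 : (Real.sqrt (1 - γ ^ 2) * ‖w‖) ^ 2 ≤ ‖w + v‖ ^ 2 := by
      rw [mul_pow, Real.sq_sqrt hpos.le]; linarith
    have := Real.sqrt_le_sqrt h2
    rwa [Real.sqrt_sq (by positivity), Real.sqrt_sq (norm_nonneg _)] at this
  rw [inv_mul_eq_div, le_div_iff₀ hs]
  linarith [hw]
end

section
/- Let V and Q be real inner product spaces with norms ‖·‖_D on V and ‖·‖ on Q, and let b : V × Q → ℝ be bilinear. Assume: (i) for every q ∈ Q there exists w_q ∈ V with ‖w_q‖_D = 1 and b(w_q, q) ≥ μβ₁‖q‖ for some constants μ > 0, β₁ ∈ (0,1]; (ii) |⟪v, w⟫_D| ≤ ‖v‖_D‖w‖_D. Define a₂((v,q),(w,r)) = ⟪v,w⟫_D − b(v,r) + b(w,q). Then for every nonzero (v,q), sup over nonzero (w,r) of a₂((v,q),(w,r)) / (‖(v,q)‖_D ‖(w,r)‖_D) ≥ (μβ₁)²/(1+μβ₁)²,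 where ‖(v,q)‖_D² = ‖v‖_D² + ‖q‖². -/
open scoped RealInnerProductSpace

/-! Two test functions suffice. Writing `x = ‖v‖`, `y = ‖q‖`, `s = ‖(v, q)‖_D`, testing against
`(v, q)` gives `x² ≤ K s²` and testing against `(w_q, 0)` gives `μβ₁ y - x ≤ K s`. With `m = μβ₁`:
if `x ≥ m s / (1 + m)` the first bound already yields `K ≥ m² / (1 + m)²`; otherwise `y` carries
most of `s`, namely `y (1 + m)² ≥ (1 + 2m) s`, and the second bound does. -/

lemma sq_le_mul_one_add_sq_of_test_bounds {m x y s K : ℝ} (hm : 0 ≤ m) (hx : 0 ≤ x) (hy : 0 ≤ y)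
    (hs : 0 < s) (hsxy : s ^ 2 = x ^ 2 + y ^ 2) (h₁ : x ^ 2 ≤ K * s ^ 2)
    (h₂ : m * y - x ≤ K * s) :
    m ^ 2 ≤ K * (1 + m) ^ 2 := by
  rcases le_or_gt (m * s) (x * (1 + m)) with hx_large | hx_small
  · have hsq : (m * s) ^ 2 ≤ (x * (1 + m)) ^ 2 := pow_le_pow_left₀ (by positivity) hx_large 2
    have : m ^ 2 * s ^ 2 ≤ K * (1 + m) ^ 2 * s ^ 2 := by
      nlinarith [mul_le_mul_of_nonneg_right h₁ (sq_nonneg (1 + m))]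
    exact le_of_mul_le_mul_right this (by positivity)
  · have hy_large : (1 + 2 * m) * s ≤ y * (1 + m) ^ 2 := by
      have hsq : (x * (1 + m)) ^ 2 < (m * s) ^ 2 :=
        pow_lt_pow_left₀ hx_small (by positivity) two_ne_zero
      refine le_of_pow_le_pow_left₀ two_ne_zero (by positivity) ?_
      nlinarith [mul_nonneg (mul_nonneg (by positivity : (0 : ℝ) ≤ 1 + 2 * m) (sq_nonneg s))
        (sq_nonneg m), mul_le_mul_of_nonneg_right hsq.le (sq_nonneg (1 + m)),
        congrArg (· * (1 + m) ^ 4) hsxy]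
    have : m ^ 2 * s ≤ K * (1 + m) ^ 2 * s := by
      nlinarith [mul_le_mul_of_nonneg_right h₂ (sq_nonneg (1 + m)),
        mul_le_mul_of_nonneg_left hy_large hm]
    exact le_of_mul_le_mul_right this hs

theorem stmt6_general
    {V Q : Type*} [NormedAddCommGroup V] [InnerProductSpace ℝ V]
    [NormedAddCommGroup Q] [InnerProductSpace ℝ Q]
    (b : V →ₗ[ℝ] Q →ₗ[ℝ] ℝ) (μ β₁ : ℝ) (hμ : 0 < μ) (hβ₁0 : 0 < β₁)
    (hinfsup : ∀ q : Q, ∃ w : V, ‖w‖ = 1 ∧ μ * β₁ * ‖q‖ ≤ b w q)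
    (a₂ : (V × Q) → (V × Q) → ℝ)
    (ha₂ : ∀ v q w r, a₂ (v, q) (w, r) = ⟪v, w⟫ - b v r + b w q)
    (v : V) (q : Q) (hvq : (v, q) ≠ 0) :
    ∀ K : ℝ,
      (∀ w : V, ∀ r : Q, (w, r) ≠ (0, 0) →
        a₂ (v, q) (w, r) ≤
          K * Real.sqrt (‖v‖ ^ 2 + ‖q‖ ^ 2) * Real.sqrt (‖w‖ ^ 2 + ‖r‖ ^ 2)) →
      (μ * β₁) ^ 2 / (1 + μ * β₁) ^ 2 ≤ K := by
  intro K hK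
  obtain ⟨w, hw, hwq⟩ := hinfsup q
  have hnorm_pos : 0 < ‖v‖ ^ 2 + ‖q‖ ^ 2 := by
    rcases eq_or_ne v 0 with rfl | hv
    · have hq : q ≠ 0 := by rintro rfl; exact hvq rfl
      have := norm_pos_iff.mpr hq
      positivity
    · have := norm_pos_iff.mpr hv
      positivity
  set s := Real.sqrt (‖v‖ ^ 2 + ‖q‖ ^ 2)
  have h₁ : ‖v‖ ^ 2 ≤ K * s ^ 2 := by
    have htest := hK v q hvq
    rw [ha₂, sub_add_cancel, real_inner_self_eq_norm_sq] at htest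
    rwa [mul_assoc, ← sq] at htest
  have h₂ : μ * β₁ * ‖q‖ - ‖v‖ ≤ K * s := by
    have hw0 : (w, (0 : Q)) ≠ (0, 0) := by simp [← norm_ne_zero_iff, hw]
    have hinner : -‖v‖ ≤ ⟪v, w⟫ := by
      simpa [hw] using neg_le_of_abs_le (abs_real_inner_le_norm v w)
    have htest := hK w 0 hw0
    simp only [ha₂, map_zero, sub_zero, hw, norm_zero, one_pow, zero_pow two_ne_zero, add_zero,
      Real.sqrt_one, mul_one] at htest
    linarith
  rw [div_le_iff₀ (by positivity)]
  exact sq_le_mul_one_add_sq_of_test_bounds (by positivity) (norm_nonneg v) (norm_nonneg q)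
    (Real.sqrt_pos.mpr hnorm_pos) (Real.sq_sqrt hnorm_pos.le) h₁ h₂

/-- Inf-sup stability of the diagonalized system (Lemma 4.4): with
`a₂((v,q),(w,r)) = ⟪v,w⟫_D − b(v,r) + b(w,q)` and the inf-sup hypothesis
`∀ q, ∃ w, ‖w‖_D = 1 ∧ b(w,q) ≥ μβ₁‖q‖`, for every nonzero `(v,q)` the sup over
nonzero `(w,r)` of `a₂((v,q),(w,r))/(‖(v,q)‖_D‖(w,r)‖_D)` is at least
`(μβ₁)²/(1+μβ₁)²`, where `‖(v,q)‖_D² = ‖v‖_D² + ‖q‖²`. -/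
theorem stmt6
    {V Q : Type*} [NormedAddCommGroup V] [InnerProductSpace ℝ V]
    [NormedAddCommGroup Q] [InnerProductSpace ℝ Q]
    (b : V →ₗ[ℝ] Q →ₗ[ℝ] ℝ) (μ β₁ : ℝ) (hμ : 0 < μ) (hβ₁0 : 0 < β₁) (hβ₁1 : β₁ ≤ 1)
    (hinfsup : ∀ q : Q, ∃ w : V, ‖w‖ = 1 ∧ μ * β₁ * ‖q‖ ≤ b w q)
    (a₂ : (V × Q) → (V × Q) → ℝ)
    (ha₂ : ∀ v q w r, a₂ (v, q) (w, r) = ⟪v, w⟫ - b v r + b w q)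
    (v : V) (q : Q) (hvq : (v, q) ≠ 0) :
    ∀ K : ℝ,
      (∀ w : V, ∀ r : Q, (w, r) ≠ (0, 0) →
        a₂ (v, q) (w, r) ≤
          K * Real.sqrt (‖v‖ ^ 2 + ‖q‖ ^ 2) * Real.sqrt (‖w‖ ^ 2 + ‖r‖ ^ 2)) →
      (μ * β₁) ^ 2 / (1 + μ * β₁) ^ 2 ≤ K :=
  stmt6_general b μ β₁ hμ hβ₁0 hinfsup a₂ ha₂ v q hvq
end

section
/- Let D ∈ ℝ^{n×n} be diagonal with positive entries and B ∈ ℝ^{n×m} with full column rank, and let c_s > 0. Then the matrix M_{vp} = [[D, B],[−Bᵀ, c_s D_p − Bᵀ D^{-1} B]], where D_p = diag(Bᵀ D^{-1} B), is invertible, and its inverse can be computed by solving two diagonal systems: x_p = (c_s D_p)^{-1}(F_p + Bᵀ D^{-1} F_v) and x_u = D^{-1}(F_v − B x_p). -/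
/-!
The lower-right block is built so that the Schur complement of `D` equals the diagonal
matrix `c_s D_p`: block elimination of `x_u = D⁻¹ (F_v − B x_p)` leaves the diagonal system
`c_s D_p x_p = F_p + Bᵀ D⁻¹ F_v`. Its entries `c_s (Bᵀ D⁻¹ B)_{jj} = c_s ∑ᵢ B_{ij}² / d_i` are
positive because `D` is positive and no column of `B` vanishes, so the two-step solve works
for every right-hand side and `M_{vp}` is surjective, hence invertible.
-/

open Matrix

namespace Matrix

theorem fromBlocks_schur_mulVec_elim {R ι κ : Type*} [CommRing R] [Fintype ι] [DecidableEq ι]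
    [Fintype κ] {D Dinv : Matrix ι ι R} (hD : D * Dinv = 1) (B : Matrix ι κ R) {S : Matrix κ κ R}
    {Fv : ι → R} {Fp xp : κ → R} (hS : S *ᵥ xp = Fp + (Bᵀ * Dinv) *ᵥ Fv) :
    fromBlocks D B (-Bᵀ) (S - Bᵀ * Dinv * B) *ᵥ Sum.elim (Dinv *ᵥ (Fv - B *ᵥ xp)) xp =
      Sum.elim Fv Fp := by
  rw [fromBlocks_mulVec, Sum.elim_comp_inl, Sum.elim_comp_inr]
  congr 1
  · rw [mulVec_mulVec, hD, one_mulVec, sub_add_cancel]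
  · rw [sub_mulVec, hS, neg_mulVec, mulVec_mulVec, mulVec_sub, mulVec_mulVec]
    abel

theorem transpose_mul_diagonal_mul_self_apply {R ι κ : Type*} [CommSemiring R] [Fintype ι]
    [DecidableEq ι] (B : Matrix ι κ R) (w : ι → R) (j k : κ) :
    (Bᵀ * diagonal w * B) j k = ∑ i, w i * B i j * B i k := by
  simp only [mul_apply, transpose_apply, diagonal_apply, mul_ite, mul_zero,
    Finset.sum_ite_eq', Finset.mem_univ, if_true]
  exact Finset.sum_congr rfl fun i _ => by ring

theorem transpose_mul_diagonal_mul_self_apply_self_pos {R ι κ : Type*} [CommRing R]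
    [LinearOrder R] [IsStrictOrderedRing R] [Fintype ι] [DecidableEq ι] [Fintype κ] [DecidableEq κ]
    {B : Matrix ι κ R} (hB : Function.Injective B.mulVec) {w : ι → R} (hw : ∀ i, 0 < w i)
    (j : κ) : 0 < (Bᵀ * diagonal w * B) j j := by
  have hcol : B.col j ≠ 0 := by
    rw [← mulVec_single_one, ← B.mulVec_zero]
    exact hB.ne (Pi.single_ne_zero_iff.mpr one_ne_zero)
  obtain ⟨i, hi⟩ := Function.ne_iff.mp hcol
  rw [transpose_mul_diagonal_mul_self_apply]
  refine Finset.sum_pos' (fun i _ => ?_) ⟨i, Finset.mem_univ i, ?_⟩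
  · rw [mul_assoc]; exact mul_nonneg (hw i).le (mul_self_nonneg _)
  · rw [mul_assoc]; exact mul_pos (hw i) (mul_self_pos.mpr hi)

end Matrix

/-- Invertibility of the fully diagonalized matrix `M_{vp}` and the explicit
two-step diagonal solve: `x_p = (c_s D_p)⁻¹ (F_p + Bᵀ D⁻¹ F_v)` and
`x_u = D⁻¹ (F_v − B x_p)` solve `M_{vp} [x_u; x_p] = [F_v; F_p]`. -/
theorem stmt9
    {n m : ℕ} (dv : Fin n → ℝ) (hdv : ∀ i, 0 < dv i)
    (B : Matrix (Fin n) (Fin m) ℝ) (hB : Function.Injective B.mulVec)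
    (cs : ℝ) (hcs : 0 < cs) :
    letI D : Matrix (Fin n) (Fin n) ℝ := Matrix.diagonal dv
    letI Dinv : Matrix (Fin n) (Fin n) ℝ := Matrix.diagonal fun i => (dv i)⁻¹
    letI Dp : Matrix (Fin m) (Fin m) ℝ :=
      Matrix.diagonal fun j => (B.transpose * Dinv * B) j j
    letI Mvp := Matrix.fromBlocks D B (-B.transpose) (cs • Dp - B.transpose * Dinv * B)
    IsUnit Mvp ∧
      ∀ Fv : Fin n → ℝ, ∀ Fp : Fin m → ℝ,
        letI xp : Fin m → ℝ :=
          fun j => (cs * (B.transpose * Dinv * B) j j)⁻¹ *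
            (Fp + (B.transpose * Dinv).mulVec Fv) j
        letI xu : Fin n → ℝ := fun i => (dv i)⁻¹ * (Fv - B.mulVec xp) i
        Mvp.mulVec (Sum.elim xu xp) = Sum.elim Fv Fp := by
  set Dinv : Matrix (Fin n) (Fin n) ℝ := diagonal fun i => (dv i)⁻¹
  set xp : (Fin n → ℝ) → (Fin m → ℝ) → Fin m → ℝ := fun Fv Fp j =>
    (cs * (Bᵀ * Dinv * B) j j)⁻¹ * (Fp + (Bᵀ * Dinv) *ᵥ Fv) j
  have hD : diagonal dv * Dinv = 1 := by
    rw [diagonal_mul_diagonal, ← diagonal_one]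
    exact congrArg diagonal (funext fun i => mul_inv_cancel₀ (hdv i).ne')
  have hDp : ∀ j, cs * (Bᵀ * Dinv * B) j j ≠ 0 := fun j => (mul_pos hcs
    (transpose_mul_diagonal_mul_self_apply_self_pos hB (fun i => inv_pos.mpr (hdv i)) j)).ne'
  have hsolve : ∀ Fv Fp, fromBlocks (diagonal dv) B (-Bᵀ)
      (cs • diagonal (fun j => (Bᵀ * Dinv * B) j j) - Bᵀ * Dinv * B) *ᵥ
        Sum.elim (fun i => (dv i)⁻¹ * (Fv - B *ᵥ xp Fv Fp) i) (xp Fv Fp) = Sum.elim Fv Fp := by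
    intro Fv Fp
    rw [← funext (mulVec_diagonal _ (Fv - B *ᵥ xp Fv Fp))]
    refine fromBlocks_schur_mulVec_elim hD B (funext fun j => ?_)
    rw [smul_mulVec, Pi.smul_apply, mulVec_diagonal, smul_eq_mul, ← mul_assoc,
      mul_inv_cancel_left₀ (hDp j)]
  exact ⟨mulVec_surjective_iff_isUnit.mp fun F =>
    ⟨_, (hsolve (F ∘ Sum.inl) (F ∘ Sum.inr)).trans (Sum.elim_comp_inl_inr F)⟩, hsolve⟩
end

section
/- Let E be a real inner product space and suppose w₁, …, w_n ∈ E satisfy, for every index j, the strengthened Cauchy–Schwarz inequality ⟪w_j, ∑_{i>j} w_i⟫ ≥ −γ ‖w_j‖ ‖∑_{i>j} w_i‖ with γ ∈ [0,1). Then ‖∑_{j=1}^n w_j‖² ≥ ∑_{j=1}^n (1−γ)^j ‖w_j‖² ≥ (1−γ)^n ∑_{j=1}^n ‖w_j‖². -/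
open scoped RealInnerProductSpace
open Finset

section StrengthenedCauchySchwarz

variable {E : Type*} [NormedAddCommGroup E] [InnerProductSpace ℝ E]

theorem one_sub_mul_norm_sq_add_norm_sq_le {γ : ℝ} (hγ : 0 ≤ γ) {a b : E}
    (h : -(γ * ‖a‖ * ‖b‖) ≤ ⟪a, b⟫) :
    (1 - γ) * (‖a‖ ^ 2 + ‖b‖ ^ 2) ≤ ‖a + b‖ ^ 2 := by
  rw [norm_add_sq_real]
  nlinarith [sq_nonneg (‖a‖ - ‖b‖)]

theorem Fin.sum_filter_succ {M : Type*} [AddCommMonoid M] {n : ℕ} (p : Fin (n + 1) → Prop)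
    [DecidablePred p] (f : Fin (n + 1) → M) :
    ∑ i ∈ univ.filter p, f i =
      (if p 0 then f 0 else 0) + ∑ i ∈ univ.filter (fun i : Fin n => p i.succ), f i.succ := by
  simp only [sum_filter, Fin.sum_univ_succ]

/-- Peeling off `w 0` and applying the hypothesis for `j = 0` gains one factor `1 - γ`
per remaining vector. -/
theorem sum_one_sub_pow_mul_norm_sq_le_norm_sum_sq {γ : ℝ} (hγ0 : 0 ≤ γ) (hγ1 : γ ≤ 1) :
    ∀ {n : ℕ} (w : Fin n → E),
      (∀ j : Fin n, -(γ * ‖w j‖ * ‖∑ i ∈ univ.filter (fun i => j < i), w i‖) ≤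
        ⟪w j, ∑ i ∈ univ.filter (fun i => j < i), w i⟫) →
      ∑ j : Fin n, (1 - γ) ^ ((j : ℕ) + 1) * ‖w j‖ ^ 2 ≤ ‖∑ j, w j‖ ^ 2
  | 0, _, _ => by simp
  | n + 1, w, hSCS => by
    have tail_sum (j : Fin (n + 1)) :
        ∑ i ∈ univ.filter (fun i => j < i), w i =
          (if j < 0 then w 0 else 0) +
            ∑ i ∈ univ.filter (fun i : Fin n => j < i.succ), w i.succ :=
      Fin.sum_filter_succ _ w
    have ih := sum_one_sub_pow_mul_norm_sq_le_norm_sum_sq hγ0 hγ1 (fun i => w i.succ)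
      fun j => by simpa [tail_sum, Fin.succ_lt_succ_iff] using hSCS j.succ
    have head : (1 - γ) * (‖w 0‖ ^ 2 + ‖∑ i : Fin n, w i.succ‖ ^ 2) ≤
        ‖w 0 + ∑ i : Fin n, w i.succ‖ ^ 2 :=
      one_sub_mul_norm_sq_add_norm_sq_le hγ0 (by simpa [tail_sum, Fin.succ_pos] using hSCS 0)
    calc ∑ j : Fin (n + 1), (1 - γ) ^ ((j : ℕ) + 1) * ‖w j‖ ^ 2
        = (1 - γ) * (‖w 0‖ ^ 2 +
            ∑ j : Fin n, (1 - γ) ^ ((j : ℕ) + 1) * ‖w j.succ‖ ^ 2) := by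
          simp only [Fin.sum_univ_succ, Fin.val_zero, Fin.val_succ, mul_add, mul_sum]
          ring_nf
      _ ≤ (1 - γ) * (‖w 0‖ ^ 2 + ‖∑ i : Fin n, w i.succ‖ ^ 2) := by gcongr
      _ ≤ ‖∑ j, w j‖ ^ 2 := by rwa [Fin.sum_univ_succ]

end StrengthenedCauchySchwarz

theorem pow_mul_sum_le_sum_pow_succ_mul {r : ℝ} (hr0 : 0 ≤ r) (hr1 : r ≤ 1) {n : ℕ}
    {a : Fin n → ℝ} (ha : ∀ j, 0 ≤ a j) :
    r ^ n * ∑ j, a j ≤ ∑ j : Fin n, r ^ ((j : ℕ) + 1) * a j := by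
  rw [mul_sum]
  exact sum_le_sum fun j _ =>
    mul_le_mul_of_nonneg_right (pow_le_pow_of_le_one hr0 hr1 j.isLt) (ha j)

/-- Telescoping form of the strengthened Cauchy–Schwarz estimate (used in the proof
of Lemma 4.2): if `⟪w_j, ∑_{i>j} w_i⟫ ≥ −γ‖w_j‖‖∑_{i>j} w_i‖` for every `j`, with
`γ ∈ [0,1)`, then `‖∑ w_j‖² ≥ ∑_j (1−γ)^j ‖w_j‖² ≥ (1−γ)^n ∑_j ‖w_j‖²`
(indices `j = 1,…,n`). -/
theorem stmt19
    {E : Type*} [NormedAddCommGroup E] [InnerProductSpace ℝ E]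
    (n : ℕ) (w : Fin n → E) (γ : ℝ) (hγ0 : 0 ≤ γ) (hγ1 : γ < 1)
    (hSCS : ∀ j : Fin n,
      -(γ * ‖w j‖ * ‖∑ i ∈ Finset.univ.filter (fun i => j < i), w i‖) ≤
        ⟪w j, ∑ i ∈ Finset.univ.filter (fun i => j < i), w i⟫) :
    (∑ j : Fin n, (1 - γ) ^ ((j : ℕ) + 1) * ‖w j‖ ^ 2 ≤ ‖∑ j, w j‖ ^ 2) ∧
      (1 - γ) ^ n * ∑ j, ‖w j‖ ^ 2 ≤ ∑ j : Fin n, (1 - γ) ^ ((j : ℕ) + 1) * ‖w j‖ ^ 2 :=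
  ⟨sum_one_sub_pow_mul_norm_sq_le_norm_sum_sq hγ0 hγ1.le w hSCS,
    pow_mul_sum_le_sum_pow_succ_mul (by linarith) (by linarith) fun _ => sq_nonneg _⟩
end
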